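/- Fix n ≥ 2, a port assignment P, and a permutation f of Fin n satisfying P (f i) j = f (P i j) for all i ∈ Fin n and j ∈ Fin (n−1). If x : Fin n → ℕ → Bool satisfies x (f i) = x i for every i, then K^{P,x} (f i) t = K^{P,x} i t for every i ∈ Fin n and every t ∈ ℕ. (This is the inductive claim in the proof of the paper's Lemma 5: under a port-number-preserving and randomness-preserving automorphism f, node i and node f(i) have identical knowledge at every time, i.e., i ∼_t f(i).) -/

import Mathlib

open MeasureTheory Filter
open scoped ENNReal

/-- Message-passing knowledge values at time `t` (for `m = n - 1` ports): `init` at time `0`;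
at time `t+1` a knowledge value is the previous knowledge, the fresh random bit, and the
vector of the previous knowledge values received on the `m` ports. (This is the time-indexed
form of the inductive type `W` with constructors `init : W` and
`step : W → Bool → (Fin (n-1) → W) → W`.) -/
def MPW (m : ℕ) : ℕ → Type
  | 0 => PUnit
  | t + 1 => MPW m t × Bool × (Fin m → MPW m t)

/-- The message-passing knowledge `K^{P,x} i t` of node `i` at time `t`, given the port
assignment `P` and the bit sequences `x`: `K^{P,x} i 0 = init` and
`K^{P,x} i (t+1) = step (K^{P,x} i t) (x i t) (fun j => K^{P,x} (P i j) t)`. -/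
def mpK {n : ℕ} (P : Fin n → Fin (n - 1) → Fin n) (x : Fin n → ℕ → Bool) :
    Fin n → (t : ℕ) → MPW (n - 1) t
  | _, 0 => PUnit.unit
  | i, t + 1 => (mpK P x i t, x i t, fun j => mpK P x (P i j) t)

theorem mpK_apply_eq_of_commute_ports {n : ℕ} {P : Fin n → Fin (n - 1) → Fin n}
    {x : Fin n → ℕ → Bool} {f : Fin n → Fin n}
    (hf : ∀ i j, P (f i) j = f (P i j)) (hx : ∀ i, x (f i) = x i) (i : Fin n) (t : ℕ) :
    mpK P x (f i) t = mpK P x i t := by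
  induction t generalizing i with
  | zero => rfl
  | succ t ih =>
    simp only [mpK, hx, hf, ih]
    rfl

theorem automorphism_preserves_knowledge_general (n : ℕ)
    (P : Fin n → Fin (n - 1) → Fin n)
    (f : Equiv.Perm (Fin n)) (hf : ∀ (i : Fin n) (j : Fin (n - 1)), P (f i) j = f (P i j))
    (x : Fin n → ℕ → Bool) (hx : ∀ i : Fin n, x (f i) = x i) :
    ∀ (i : Fin n) (t : ℕ), mpK P x (f i) t = mpK P x i t :=
  mpK_apply_eq_of_commute_ports hf hx

/-- Under a port-number-preserving and randomness-preserving automorphism `f`, node `i` and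
node `f i` have identical knowledge at every time: `K^{P,x} (f i) t = K^{P,x} i t`. -/
theorem automorphism_preserves_knowledge (n : ℕ) (hn : 2 ≤ n)
    (P : Fin n → Fin (n - 1) → Fin n)
    (hPinj : ∀ i, Function.Injective (P i)) (hPne : ∀ i j, P i j ≠ i)
    (f : Equiv.Perm (Fin n)) (hf : ∀ (i : Fin n) (j : Fin (n - 1)), P (f i) j = f (P i j))
    (x : Fin n → ℕ → Bool) (hx : ∀ i : Fin n, x (f i) = x i) :
    ∀ (i : Fin n) (t : ℕ), mpK P x (f i) t = mpK P x i t :=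
  automorphism_preserves_knowledge_general n P f hf x hx
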